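/- Least action principle: let s : ℤ^d_n → ℝ, and let F_s = { f : ℤ^d_n → ℝ : f ≥ 0 and s − (−Δ)^{α/2}_n f ≤ 1 pointwise }. If u ≥ 0 satisfies s − (−Δ)^{α/2}_n u = 1 and min u = 0, then u(x) = inf { f(x) : f ∈ F_s } for every x ∈ ℤ^d_n. -/

import Mathlib

open Real

noncomputable def znorm (d : ℕ) (z : Fin d → ℤ) : ℝ :=
  Real.sqrt (∑ i, ((z i : ℝ)) ^ 2)

/-- `c^{(α)} = (∑_{z ∈ ℤ^d \ {0}} ‖z‖^{-(d+α)})⁻¹`. -/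
noncomputable def cAlpha (d : ℕ) (α : ℝ) : ℝ :=
  (∑' z : {z : Fin d → ℤ // z ≠ 0}, znorm d z.1 ^ (-((d : ℝ) + α)))⁻¹

/-- Long-range transition probabilities on the discrete torus. -/
noncomputable def pn (d n : ℕ) (α : ℝ) (x : Fin d → ZMod n) : ℝ :=
  cAlpha d α *
    ∑' z : {z : Fin d → ℤ // z ≠ 0 ∧ ∀ i, ((z i : ZMod n)) = x i},
      znorm d z.1 ^ (-((d : ℝ) + α))

/-- Discrete fractional Laplacian `(−Δ)^{α/2}_n u (x) = u x − ∑_y p_n^{(α)}(x−y) u y`. -/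
noncomputable def fracLap (d n : ℕ) [NeZero n] (α : ℝ)
    (u : (Fin d → ZMod n) → ℝ) (x : Fin d → ZMod n) : ℝ :=
  u x - ∑ y : Fin d → ZMod n, pn d n α (x - y) * u y

/-!
For `f ∈ F_s` the difference `f - u` has nonnegative fractional Laplacian: at every point it
dominates its own `p_n`-average. As `p_n` is a probability distribution charging every point of
the torus, such a function is constant (at a minimum point the average can only equal the minimum
if all values do). Evaluating at a zero of `u` gives `f - u ≥ 0`, and `u ∈ F_s` itself, so `u x`
is the least element of `{f x | f ∈ F_s}`.
-/

section MaximumPrinciple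

variable {ι : Type*} [Fintype ι] {P : ι → ι → ℝ} {g : ι → ℝ}

lemma eq_of_sum_mul_le_of_forall_le {x₀ : ι} (hP : ∀ y, 0 ≤ P x₀ y) (hP1 : ∑ y, P x₀ y = 1)
    (hg : ∑ y, P x₀ y * g y ≤ g x₀) (hmin : ∀ y, g x₀ ≤ g y) {y : ι} (hy : 0 < P x₀ y) :
    g y = g x₀ := by
  have hterm : ∀ z ∈ Finset.univ, 0 ≤ P x₀ z * (g z - g x₀) :=
    fun z _ => mul_nonneg (hP z) (sub_nonneg.mpr (hmin z))
  have hsum : ∑ z, P x₀ z * (g z - g x₀) = 0 := by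
    refine le_antisymm ?_ (Finset.sum_nonneg hterm)
    simp only [mul_sub, Finset.sum_sub_distrib, ← Finset.sum_mul, hP1, one_mul]
    linarith
  have := (Finset.sum_eq_zero_iff_of_nonneg hterm).mp hsum y (Finset.mem_univ y)
  linarith [(mul_eq_zero.mp this).resolve_left hy.ne']

lemma eq_of_forall_sum_mul_le (hP : ∀ x y, 0 < P x y) (hP1 : ∀ x, ∑ y, P x y = 1)
    (hg : ∀ x, ∑ y, P x y * g y ≤ g x) (x y : ι) : g x = g y := by
  have : Nonempty ι := ⟨x⟩
  obtain ⟨x₀, hx₀⟩ := Finite.exists_min g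
  have key (z : ι) : g z = g x₀ :=
    eq_of_sum_mul_le_of_forall_le (fun z => (hP x₀ z).le) (hP1 x₀) (hg x₀) hx₀ (hP x₀ z)
  rw [key x, key y]

end MaximumPrinciple

open Module Submodule in
lemma summable_znorm_rpow {d : ℕ} {r : ℝ} (hr : r < -d) :
    Summable fun z : Fin d → ℤ => znorm d z ^ r := by
  let b := (EuclideanSpace.basisFun (Fin d) ℝ).toBasis
  let bL := b.restrictScalars ℤ
  have hrank : finrank ℤ (span ℤ (Set.range b)) = d := by
    rw [finrank_eq_card_basis bL, Fintype.card_fin]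
  have hL := ZLattice.summable_norm_rpow (span ℤ (Set.range b)) r (by rwa [hrank])
  refine (bL.equivFun.symm.toEquiv.summable_iff.mpr hL).congr fun z => ?_
  have hz : (bL.equivFun.symm z : EuclideanSpace ℝ (Fin d)) = WithLp.toLp 2 (Int.cast ∘ z) := by
    ext i
    rw [Basis.equivFun_symm_apply, Submodule.coe_sum]
    simp only [Submodule.coe_smul_of_tower, bL, Basis.restrictScalars_apply]
    simp [b, Pi.single_apply]
  simp only [LinearEquiv.coe_toEquiv, Function.comp_apply, Submodule.coe_norm, hz,
    EuclideanSpace.norm_eq, znorm]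
  simp

lemma znorm_pos {d : ℕ} {z : Fin d → ℤ} (hz : z ≠ 0) : 0 < znorm d z := by
  obtain ⟨i, hi⟩ := Function.ne_iff.mp hz
  have hi : (0 : ℝ) < (z i : ℝ) ^ 2 := by
    have : (z i : ℝ) ≠ 0 := by exact_mod_cast hi
    positivity
  exact Real.sqrt_pos.mpr <| hi.trans_le <|
    Finset.single_le_sum (f := fun j => (z j : ℝ) ^ 2) (fun j _ => sq_nonneg _) (Finset.mem_univ i)

lemma tsum_znorm_rpow_pos {d : ℕ} {r : ℝ} (hr : r < -d) {s : Set (Fin d → ℤ)} {z : Fin d → ℤ}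
    (hzs : z ∈ s) (hz : z ≠ 0) : 0 < ∑' w : s, znorm d w ^ r :=
  (summable_znorm_rpow hr).subtype s |>.tsum_pos (fun _ => Real.rpow_nonneg (Real.sqrt_nonneg _) r)
    ⟨z, hzs⟩ (Real.rpow_pos_of_pos (znorm_pos hz) r)

section Kernel

variable {d n : ℕ} {α : ℝ}

lemma tsum_nonzero_znorm_rpow_pos (hd : 1 ≤ d) (hα : 0 < α) :
    0 < ∑' z : {z : Fin d → ℤ // z ≠ 0}, znorm d z ^ (-((d : ℝ) + α)) := by
  have : NeZero d := ⟨by omega⟩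
  exact tsum_znorm_rpow_pos (r := -((d : ℝ) + α)) (by linarith) (s := {z | z ≠ 0}) (z := 1)
    one_ne_zero one_ne_zero

lemma cAlpha_pos (hd : 1 ≤ d) (hα : 0 < α) : 0 < cAlpha d α :=
  inv_pos.mpr (tsum_nonzero_znorm_rpow_pos hd hα)

lemma pn_pos [NeZero n] (hd : 1 ≤ d) (hα : 0 < α) (x : Fin d → ZMod n) : 0 < pn d n α x := by
  let z : Fin d → ℤ := fun i => (x i).val + n
  have hz : z ≠ 0 := Function.ne_iff.mpr ⟨⟨0, hd⟩, by
    simp only [z, Pi.zero_apply]; have := NeZero.pos n; omega⟩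
  have hzx : ∀ i, (z i : ZMod n) = x i := fun i => by simp [z]
  exact mul_pos (cAlpha_pos hd hα) <| tsum_znorm_rpow_pos (r := -((d : ℝ) + α)) (by linarith)
    (s := {z | z ≠ 0 ∧ ∀ i, (z i : ZMod n) = x i}) ⟨hz, hzx⟩ hz

lemma sum_pn_eq_one [NeZero n] (hd : 1 ≤ d) (hα : 0 < α) :
    ∑ x : Fin d → ZMod n, pn d n α x = 1 := by
  let w : {z : Fin d → ℤ // z ≠ 0} → ℝ := fun z => znorm d z ^ (-((d : ℝ) + α))
  let reduce : {z : Fin d → ℤ // z ≠ 0} → Fin d → ZMod n := fun z i => z.1 i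
  have hw : Summable w :=
    (summable_znorm_rpow (r := -((d : ℝ) + α)) (by linarith)).subtype {z | z ≠ 0}
  -- the series normalised by `cAlpha`, summed residue class by residue class
  have hfib := hw.hasSum.tsum_fiberwise reduce
  have hfib_eq (x : Fin d → ZMod n) : ∑' z : reduce ⁻¹' {x}, w z =
      ∑' z : {z : Fin d → ℤ // z ≠ 0 ∧ ∀ i, (z i : ZMod n) = x i},
        znorm d z ^ (-((d : ℝ) + α)) := by
    let e : reduce ⁻¹' {x} ≃ {z : Fin d → ℤ // z ≠ 0 ∧ ∀ i, (z i : ZMod n) = x i} :=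
      { toFun := fun z => ⟨z.1.1, z.1.2, congrFun z.2⟩
        invFun := fun z => ⟨⟨z.1, z.2.1⟩, funext z.2.2⟩ }
    exact e.tsum_eq (fun z => znorm d z ^ (-((d : ℝ) + α)))
  simp only [hfib_eq] at hfib
  simp only [pn, ← Finset.mul_sum]
  rw [(hasSum_fintype _).unique hfib, cAlpha]
  exact inv_mul_cancel₀ (tsum_nonzero_znorm_rpow_pos hd hα).ne'

lemma sum_pn_sub_eq_one [NeZero n] (hd : 1 ≤ d) (hα : 0 < α) (x : Fin d → ZMod n) :
    ∑ y, pn d n α (x - y) = 1 :=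
  ((Equiv.subLeft x).sum_comp (pn d n α)).trans (sum_pn_eq_one hd hα)

lemma fracLap_sub [NeZero n] (f g : (Fin d → ZMod n) → ℝ) (x : Fin d → ZMod n) :
    fracLap d n α (f - g) x = fracLap d n α f x - fracLap d n α g x := by
  simp only [fracLap, Pi.sub_apply, mul_sub, Finset.sum_sub_distrib]
  ring

lemma eq_of_fracLap_nonneg [NeZero n] (hd : 1 ≤ d) (hα : 0 < α)
    {g : (Fin d → ZMod n) → ℝ} (hg : ∀ x, 0 ≤ fracLap d n α g x) (x y : Fin d → ZMod n) :
    g x = g y :=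
  eq_of_forall_sum_mul_le (fun x y => pn_pos hd hα (x - y)) (sum_pn_sub_eq_one hd hα)
    (fun x => sub_nonneg.mp (hg x)) x y

end Kernel

/-- Least action principle. -/
theorem stmt10 (d n : ℕ) (hd : 1 ≤ d) [NeZero n] (α : ℝ) (hα : 0 < α)
    (s : (Fin d → ZMod n) → ℝ) (u : (Fin d → ZMod n) → ℝ)
    (hu0 : ∀ x, 0 ≤ u x) (humin : ∃ x, u x = 0)
    (hueq : ∀ x, s x - fracLap d n α u x = 1) :
    ∀ x, u x = sInf {r : ℝ | ∃ f : (Fin d → ZMod n) → ℝ,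
      (∀ y, 0 ≤ f y) ∧ (∀ y, s y - fracLap d n α f y ≤ 1) ∧ r = f x} := by
  intro x
  refine Eq.symm <| IsLeast.csInf_eq ⟨⟨u, hu0, fun y => (hueq y).le, rfl⟩, ?_⟩
  rintro _ ⟨f, hf0, hf, rfl⟩
  obtain ⟨x₀, hx₀⟩ := humin
  have hsuper : ∀ y, 0 ≤ fracLap d n α (f - u) y := fun y => by
    rw [fracLap_sub]
    linarith [hf y, hueq y]
  have hconst := eq_of_fracLap_nonneg hd hα hsuper x x₀
  simp only [Pi.sub_apply, hx₀, sub_zero] at hconst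
  linarith [hf0 x₀]
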